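/- Let ζ > 0, let λ > 0, and let (λ², φ) be an eigenpair of the beam problem normalized so that ∫₀¹ (φ(x))² dx = 1. Then the quantity |C₃ψ|² := ζ² (φ‴(0))² / (2λ²), which is the squared modulus of the image of the corresponding normalized eigenvector of the state operator under the non-classical-moment observation operator, satisfies 2ζ ≤ ζ² (φ‴(0))² / (2λ²) ≤ 3ζ; equivalently, √(2ζ) ≤ |C₃ψ| ≤ √(3ζ). -/

import Mathlib

open Set MeasureTheory intervalIntegral

/-- `Dv m f x` is the `m`-th derivative of `f` on the interval `[0,1]`. -/
noncomputable def Dv (m : ℕ) (f : ℝ → ℝ) (x : ℝ) : ℝ :=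
  iteratedDerivWithin m f (Icc (0:ℝ) 1) x

/-- The beam boundary conditions. -/
def BeamBC (ζ : ℝ) (f : ℝ → ℝ) : Prop :=
  f 0 = 0 ∧ Dv 1 f 0 = 0 ∧ Dv 2 f 0 = 0 ∧
  Dv 2 f 1 - ζ * Dv 4 f 1 = 0 ∧
  ζ * Dv 5 f 1 - Dv 3 f 1 = 0 ∧
  ζ * Dv 3 f 1 = 0

/-- An eigenpair `(μ, φ)` of the beam problem. -/
def BeamEigenpair (ζ μ : ℝ) (φ : ℝ → ℝ) : Prop :=
  ContDiffOn ℝ 6 φ (Icc (0:ℝ) 1) ∧ BeamBC ζ φ ∧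
  (¬ ∀ x ∈ Icc (0:ℝ) 1, φ x = 0) ∧
  (∀ x ∈ Icc (0:ℝ) 1, Dv 4 φ x - ζ * Dv 6 φ x = μ * φ x)

/-!
Write `A = ∫ φ''²`, `C = ∫ φ'''²` and `N = ∫ φ²`. Multiplying the equation
`φ⁗ - ζ φ⁽⁶⁾ = μ φ` by `φ` and by the multiplier `(x - 1) φ'` and integrating by parts,
the beam conditions kill every boundary term except `ζ φ'''(0)² / 2` at `x = 0`:
`A + ζ C = μ N` and `3 A + 5 ζ C + μ N = ζ φ'''(0)²`. Eliminating `A` gives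
`ζ φ'''(0)² = 4 μ N + 2 ζ C` with `0 ≤ ζ C ≤ μ N`, so `4 λ² ≤ ζ φ'''(0)² ≤ 6 λ²` for `μ = λ²`,
`N = 1`, which is the claim after multiplying by `ζ / (2 λ²)`.
-/

theorem integral_eq_sub_of_hasDerivWithinAt_Icc {a b : ℝ} (hab : a ≤ b) {F f : ℝ → ℝ}
    (hF : ∀ x ∈ Icc a b, HasDerivWithinAt F (f x) (Icc a b) x)
    (hf : IntervalIntegrable f volume a b) :
    ∫ x in a..b, f x = F b - F a :=
  integral_eq_sub_of_hasDerivAt_of_le hab (fun x hx => (hF x hx).continuousWithinAt)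
    (fun x hx => (hF x (Ioo_subset_Icc_self hx)).hasDerivAt (Icc_mem_nhds hx.1 hx.2)) hf

theorem integral_linear_combination_sq {p q : ℝ} {u v w : ℝ → ℝ}
    (hu : IntervalIntegrable (fun x => u x ^ 2) volume p q)
    (hv : IntervalIntegrable (fun x => v x ^ 2) volume p q)
    (hw : IntervalIntegrable (fun x => w x ^ 2) volume p q) (a b c : ℝ) :
    ∫ x in p..q, (a * u x ^ 2 + b * v x ^ 2 + c * w x ^ 2) =
      a * (∫ x in p..q, u x ^ 2) + b * (∫ x in p..q, v x ^ 2) + c * ∫ x in p..q, w x ^ 2 := by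
  rw [integral_add ((hu.const_mul a).add (hv.const_mul b)) (hw.const_mul c),
    integral_add (hu.const_mul a) (hv.const_mul b),
    intervalIntegral.integral_const_mul, intervalIntegral.integral_const_mul,
    intervalIntegral.integral_const_mul]

section Dv

variable {φ : ℝ → ℝ} {n m : ℕ}

@[simp]
theorem Dv_zero : Dv 0 φ = φ :=
  funext fun _ => by simp [Dv]

theorem hasDerivWithinAt_Dv (hφ : ContDiffOn ℝ n φ (Icc 0 1)) (hm : m < n) {x : ℝ}
    (hx : x ∈ Icc (0:ℝ) 1) : HasDerivWithinAt (Dv m φ) (Dv (m + 1) φ x) (Icc 0 1) x := by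
  have hderiv : HasDerivWithinAt (Dv m φ)
      (derivWithin (iteratedDerivWithin m φ (Icc 0 1)) (Icc 0 1) x) (Icc 0 1) x :=
    (hφ.differentiableOn_iteratedDerivWithin (by exact_mod_cast hm)
      (uniqueDiffOn_Icc one_pos) x hx).hasDerivWithinAt
  rwa [← iteratedDerivWithin_succ] at hderiv

theorem intervalIntegrable_Dv_sq (hφ : ContDiffOn ℝ n φ (Icc 0 1)) (hm : m ≤ n) :
    IntervalIntegrable (fun x => Dv m φ x ^ 2) volume 0 1 :=
  ((hφ.continuousOn_iteratedDerivWithin (by exact_mod_cast hm)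
    (uniqueDiffOn_Icc one_pos)).pow 2).intervalIntegrable_of_Icc zero_le_one

theorem integral_quadratic_Dv_eq_sub (hφ : ContDiffOn ℝ 3 φ (Icc 0 1)) {F : ℝ → ℝ} (a b c : ℝ)
    (hF : ∀ x ∈ Icc (0:ℝ) 1, HasDerivWithinAt F
      (a * φ x ^ 2 + b * Dv 2 φ x ^ 2 + c * Dv 3 φ x ^ 2) (Icc 0 1) x) :
    a * (∫ x in (0:ℝ)..1, φ x ^ 2) + b * (∫ x in (0:ℝ)..1, Dv 2 φ x ^ 2) +
      c * (∫ x in (0:ℝ)..1, Dv 3 φ x ^ 2) = F 1 - F 0 := by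
  have hφ0 : IntervalIntegrable (fun x => φ x ^ 2) volume 0 1 := by
    simpa using intervalIntegrable_Dv_sq hφ (m := 0) (by norm_num)
  have hφ2 := intervalIntegrable_Dv_sq hφ (m := 2) (by norm_num)
  have hφ3 := intervalIntegrable_Dv_sq hφ (m := 3) le_rfl
  rw [← integral_linear_combination_sq hφ0 hφ2 hφ3]
  exact integral_eq_sub_of_hasDerivWithinAt_Icc zero_le_one hF
    (((hφ0.const_mul a).add (hφ2.const_mul b)).add (hφ3.const_mul c))

end Dv

section Beam

variable {ζ μ : ℝ} {φ : ℝ → ℝ}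

theorem BeamBC.Dv_three_one (hζ : ζ ≠ 0) (h : BeamBC ζ φ) : Dv 3 φ 1 = 0 :=
  (mul_eq_zero.mp h.2.2.2.2.2).resolve_left hζ

theorem BeamBC.Dv_five_one (hζ : ζ ≠ 0) (h : BeamBC ζ φ) : Dv 5 φ 1 = 0 := by
  have h5 : ζ * Dv 5 φ 1 = 0 := by linear_combination h.2.2.2.2.1 + h.Dv_three_one hζ
  exact (mul_eq_zero.mp h5).resolve_left hζ

theorem BeamEigenpair.energy_identity (hζ : ζ ≠ 0) (h : BeamEigenpair ζ μ φ) :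
    (∫ x in (0:ℝ)..1, Dv 2 φ x ^ 2) + ζ * (∫ x in (0:ℝ)..1, Dv 3 φ x ^ 2) =
      μ * ∫ x in (0:ℝ)..1, φ x ^ 2 := by
  obtain ⟨hφ, hbc, -, hode⟩ := h
  have hFTC := integral_quadratic_Dv_eq_sub (hφ.of_le (by norm_num)) μ (-1) (-ζ)
    (F := fun y => Dv 3 φ y * φ y - Dv 2 φ y * Dv 1 φ y -
      ζ * (Dv 5 φ y * φ y - Dv 4 φ y * Dv 1 φ y + Dv 3 φ y * Dv 2 φ y)) fun x hx => by
    have e0 : HasDerivWithinAt φ (Dv 1 φ x) (Icc 0 1) x := by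
      simpa using hasDerivWithinAt_Dv hφ (m := 0) (by norm_num) hx
    have e1 := hasDerivWithinAt_Dv hφ (m := 1) (by norm_num) hx
    have e2 := hasDerivWithinAt_Dv hφ (m := 2) (by norm_num) hx
    have e3 := hasDerivWithinAt_Dv hφ (m := 3) (by norm_num) hx
    have e4 := hasDerivWithinAt_Dv hφ (m := 4) (by norm_num) hx
    have e5 := hasDerivWithinAt_Dv hφ (m := 5) (by norm_num) hx
    refine (((e3.mul e0).sub (e2.mul e1)).sub
      ((((e5.mul e0).sub (e4.mul e1)).add (e3.mul e2)).const_mul ζ)).congr_deriv ?_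
    linear_combination φ x * hode x hx
  have h31 := hbc.Dv_three_one hζ
  have h51 := hbc.Dv_five_one hζ
  obtain ⟨h0, h10, h20, h21, -, -⟩ := hbc
  simp only [h0, h10, h20, h31, h51] at hFTC
  linear_combination -hFTC + Dv 1 φ 1 * h21

theorem BeamEigenpair.multiplier_identity (hζ : ζ ≠ 0) (h : BeamEigenpair ζ μ φ) :
    3 * (∫ x in (0:ℝ)..1, Dv 2 φ x ^ 2) + 5 * ζ * (∫ x in (0:ℝ)..1, Dv 3 φ x ^ 2) +
      μ * (∫ x in (0:ℝ)..1, φ x ^ 2) = ζ * Dv 3 φ 0 ^ 2 := by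
  obtain ⟨hφ, hbc, -, hode⟩ := h
  have hFTC := integral_quadratic_Dv_eq_sub (hφ.of_le (by norm_num)) (-(μ / 2)) (-(3 / 2))
    (-(5 / 2 * ζ))
    (F := fun y => (y - 1) * (Dv 1 φ y * Dv 3 φ y) - Dv 1 φ y * Dv 2 φ y -
      (y - 1) * Dv 2 φ y ^ 2 / 2 -
      ζ * ((y - 1) * (Dv 1 φ y * Dv 5 φ y - Dv 2 φ y * Dv 4 φ y + Dv 3 φ y ^ 2 / 2) -
        Dv 1 φ y * Dv 4 φ y + 2 * (Dv 2 φ y * Dv 3 φ y)) -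
      μ * ((y - 1) * φ y ^ 2) / 2) fun x hx => by
    have e0 : HasDerivWithinAt φ (Dv 1 φ x) (Icc 0 1) x := by
      simpa using hasDerivWithinAt_Dv hφ (m := 0) (by norm_num) hx
    have e1 := hasDerivWithinAt_Dv hφ (m := 1) (by norm_num) hx
    have e2 := hasDerivWithinAt_Dv hφ (m := 2) (by norm_num) hx
    have e3 := hasDerivWithinAt_Dv hφ (m := 3) (by norm_num) hx
    have e4 := hasDerivWithinAt_Dv hφ (m := 4) (by norm_num) hx
    have e5 := hasDerivWithinAt_Dv hφ (m := 5) (by norm_num) hx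
    have el : HasDerivWithinAt (fun y : ℝ => y - 1) 1 (Icc 0 1) x :=
      (hasDerivWithinAt_id x _).sub_const 1
    have d1 := ((el.mul (e1.mul e3)).sub (e1.mul e2)).sub ((el.mul (e2.pow 2)).div_const 2)
    have d2 := (((el.mul (((e1.mul e5).sub (e2.mul e4)).add ((e3.pow 2).div_const 2))).sub
      (e1.mul e4)).add ((e2.mul e3).const_mul 2)).const_mul ζ
    have d3 := ((el.mul (e0.pow 2)).const_mul μ).div_const 2
    refine ((d1.sub d2).sub d3).congr_deriv ?_
    simp only [Pi.add_apply, Pi.sub_apply, Pi.mul_apply, Pi.pow_apply]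
    linear_combination (x - 1) * Dv 1 φ x * hode x hx
  have h31 := hbc.Dv_three_one hζ
  have h51 := hbc.Dv_five_one hζ
  obtain ⟨h0, h10, h20, h21, -, -⟩ := hbc
  simp only [h0, h10, h20, h31, h51] at hFTC
  linear_combination -2 * hFTC + 2 * Dv 1 φ 1 * h21

theorem BeamEigenpair.mul_sq_Dv_three_zero_mem_Icc (hζ : 0 < ζ) (h : BeamEigenpair ζ μ φ) :
    ζ * Dv 3 φ 0 ^ 2 ∈
      Icc (4 * μ * ∫ x in (0:ℝ)..1, φ x ^ 2) (6 * μ * ∫ x in (0:ℝ)..1, φ x ^ 2) := by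
  have henergy := h.energy_identity hζ.ne'
  have hmult := h.multiplier_identity hζ.ne'
  have hA : 0 ≤ ∫ x in (0:ℝ)..1, Dv 2 φ x ^ 2 := integral_nonneg zero_le_one fun _ _ => sq_nonneg _
  have hζC : 0 ≤ ζ * ∫ x in (0:ℝ)..1, Dv 3 φ x ^ 2 :=
    mul_nonneg hζ.le (integral_nonneg zero_le_one fun _ _ => sq_nonneg _)
  constructor <;> linarith

end Beam

/-- For a normalized eigenpair `(λ², φ)` of the beam problem with `λ > 0`, the
squared modulus `|C₃ψ|² = ζ² (φ‴(0))² / (2λ²)` of the image of the normalized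
eigenvector under the non-classical-moment observation operator satisfies
`2ζ ≤ |C₃ψ|² ≤ 3ζ`; equivalently `√(2ζ) ≤ |C₃ψ| ≤ √(3ζ)`. -/
theorem stmt_13 (ζ : ℝ) (hζ : 0 < ζ) (lam : ℝ) (hlam : 0 < lam) (φ : ℝ → ℝ)
    (h : BeamEigenpair ζ (lam^2) φ)
    (hnorm : ∫ x in (0:ℝ)..1, (φ x)^2 = 1) :
    (2 * ζ ≤ ζ^2 * (Dv 3 φ 0)^2 / (2 * lam^2) ∧
      ζ^2 * (Dv 3 φ 0)^2 / (2 * lam^2) ≤ 3 * ζ) ∧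
    (Real.sqrt (2 * ζ) ≤ Real.sqrt (ζ^2 * (Dv 3 φ 0)^2 / (2 * lam^2)) ∧
      Real.sqrt (ζ^2 * (Dv 3 φ 0)^2 / (2 * lam^2)) ≤ Real.sqrt (3 * ζ)) := by
  have ⟨hlow, hhigh⟩ := h.mul_sq_Dv_three_zero_mem_Icc hζ
  rw [hnorm, mul_one] at hlow hhigh
  have hlam2 : 0 < 2 * lam ^ 2 := by positivity
  have hlower : 2 * ζ ≤ ζ ^ 2 * Dv 3 φ 0 ^ 2 / (2 * lam ^ 2) := by
    rw [le_div_iff₀ hlam2]; nlinarith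
  have hupper : ζ ^ 2 * Dv 3 φ 0 ^ 2 / (2 * lam ^ 2) ≤ 3 * ζ := by
    rw [div_le_iff₀ hlam2]; nlinarith
  exact ⟨⟨hlower, hupper⟩, Real.sqrt_le_sqrt hlower, Real.sqrt_le_sqrt hupper⟩
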